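/- arXiv:2008.07943 — 7 statements merged into one kernel-verified Lean document; each statement's English description precedes it below -/
import Mathlib

section
/- Let (A,f) be a monounary algebra and a ∈ A with f^{-n}(a) = ∅ for some n ∈ ℕ. Define λ_a : A → L_{n+1} by λ_a(x) = m+1 if x ∈ f^{-m}(a) (for some m < n), and λ_a(x) = 0 otherwise, where L_{n+1} = ({0,...,n}, x ↦ max{0, x-1}). Then λ_a is a well-defined homomorphism of monounary algebras, and λ_a(x) = λ_a(a) implies x = a. -/
def preim {A : Type*} (f : A → A) (n : ℕ) (a : A) : Set A := {b | f^[n] b = a}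

/-- The operation of the line L_{n+1} on {0,...,n}: x ↦ max (0, x-1). -/
def lineOp (n : ℕ) : Fin (n + 1) → Fin (n + 1) :=
  fun y => ⟨y.val - 1, by omega⟩

theorem lambda_hom {A : Type*} (f : A → A) (a : A) (n : ℕ)
    (hE : preim f n a = ∅) :
    ∃ lam : A → Fin (n + 1),
      (∀ x m, f^[m] x = a → (lam x : ℕ) = m + 1) ∧
      (∀ x, (∀ m, f^[m] x ≠ a) → (lam x : ℕ) = 0) ∧
      (∀ x, lam (f x) = lineOp n (lam x)) ∧
      (∀ x, lam x = lam a → x = a) := by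
  classical
  have hnempty : ∀ b, f^[n] b ≠ a := by
    intro b hb
    have : b ∈ preim f n a := hb
    rw [hE] at this
    exact this
  have hnoper : ∀ p, 0 < p → f^[p] a ≠ a := by
    intro p hp hpa
    have key : ∀ k, f^[p*k] a = a := by
      intro k; induction k with
      | zero => rfl
      | succ k ih => rw [Nat.mul_succ, Function.iterate_add_apply, hpa, ih]
    have h1 : f^[n] (f^[p*(n+1) - n] a) = a := by
      rw [← Function.iterate_add_apply]
      have hgen : n + (p*(n+1) - n) = p*(n+1) := by
        have : n ≤ p*(n+1) := by nlinarith
        omega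
      rw [hgen]; exact key (n+1)
    exact hnempty _ h1
  have huniq : ∀ x m m', f^[m] x = a → f^[m'] x = a → m = m' := by
    intro x m m' hm hm'
    by_contra hne
    wlog h : m < m' generalizing m m'
    · exact this m' m hm' hm (Ne.symm hne) (by omega)
    have hper : f^[m' - m] a = a := by
      conv_lhs => rw [← hm]
      rw [← Function.iterate_add_apply]
      have : m' - m + m = m' := by omega
      rw [this]; exact hm'
    exact hnoper _ (by omega) hper
  have hlt : ∀ (x : A) (h : ∃ m, f^[m] x = a), Nat.find h < n := by
    intro x h
    by_contra hge
    push_neg at hge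
    have hfind := Nat.find_spec h
    have : f^[n] (f^[Nat.find h - n] x) = a := by
      rw [← Function.iterate_add_apply]
      have : n + (Nat.find h - n) = Nat.find h := by omega
      rw [this]; exact hfind
    exact hnempty _ this
  refine ⟨fun x => if h : ∃ m, f^[m] x = a then ⟨Nat.find h + 1, by have := hlt x h; omega⟩
      else 0, ?_, ?_, ?_, ?_⟩
  · intro x m hm
    have h : ∃ m, f^[m] x = a := ⟨m, hm⟩
    simp only [dif_pos h]
    have := huniq x (Nat.find h) m (Nat.find_spec h) hm
    simp [this]
  · intro x hx
    have h : ¬ ∃ m, f^[m] x = a := by push_neg; exact hx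
    simp [dif_neg h]
  · intro x
    by_cases h : ∃ m, f^[m] x = a
    · by_cases h0 : Nat.find h = 0
      · have hxa : x = a := by have := Nat.find_spec h; rwa [h0] at this
        have h' : ¬ ∃ k, f^[k] (f x) = a := by
          rintro ⟨k, hk⟩
          rw [← Function.iterate_succ_apply] at hk
          exact hnoper (k+1) (by omega) (hxa ▸ hk)
        simp only [dif_neg h', dif_pos h, lineOp]
        apply Fin.ext
        simp [h0]
      · have h' : ∃ k, f^[k] (f x) = a := by
          refine ⟨Nat.find h - 1, ?_⟩
          rw [← Function.iterate_succ_apply]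
          have : Nat.find h - 1 + 1 = Nat.find h := by omega
          rw [Nat.succ_eq_add_one, this]; exact Nat.find_spec h
        have heq : Nat.find h' = Nat.find h - 1 := by
          apply huniq (f x) _ _ (Nat.find_spec h')
          rw [← Function.iterate_succ_apply]
          have : Nat.find h - 1 + 1 = Nat.find h := by omega
          rw [Nat.succ_eq_add_one, this]; exact Nat.find_spec h
        simp only [dif_pos h', dif_pos h, lineOp]
        apply Fin.ext
        simp [heq]
        omega
    · have h' : ¬ ∃ k, f^[k] (f x) = a := by
        rintro ⟨k, hk⟩
        rw [← Function.iterate_succ_apply] at hk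
        exact h ⟨k+1, hk⟩
      simp only [dif_neg h', dif_neg h, lineOp]
      apply Fin.ext
      simp
  · intro x hxa
    have hA : ∃ m, f^[m] a = a := ⟨0, rfl⟩
    have hA0 : Nat.find hA = 0 := by
      simp [Nat.find_eq_zero]
    by_cases h : ∃ m, f^[m] x = a
    · simp only [dif_pos h, dif_pos hA] at hxa
      have : Nat.find h = Nat.find hA := by
        have := congrArg Fin.val hxa
        simpa using this
      have h0 : Nat.find h = 0 := this.trans hA0
      have := Nat.find_spec h
      rwa [h0] at this
    · simp only [dif_neg h, dif_pos hA] at hxa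
      have := congrArg Fin.val hxa
      simp at this
end

section
/- Let (A,f) be a monounary algebra, (B,g) a finite monounary algebra, and φ : A → B a homomorphism. If x, y ∈ A are distinct backwards eternal elements with f(x) = f(y), then φ(x) = φ(y). -/
def IsMonoHom {A B : Type*} (f : A → A) (g : B → B) (φ : A → B) : Prop :=
  ∀ a, φ (f a) = g (φ a)

theorem inseparable_backwards_eternal {A B : Type*} [Finite B]
    (f : A → A) (g : B → B) (φ : A → B) (hφ : IsMonoHom f g φ)
    (x y : A) (hxy : x ≠ y) (hfxy : f x = f y)
    (hx : ∀ n : ℕ, ∃ z, f^[n] z = x) (hy : ∀ n : ℕ, ∃ z, f^[n] z = y) :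
    φ x = φ y := by
  classical
  have hsemi : Function.Semiconj φ f g := hφ
  set S : Set B := {b | ∀ n : ℕ, ∃ z, g^[n] z = b} with hS
  -- φ of a backwards eternal element is in S
  have hmemx : φ x ∈ S := by
    intro n
    obtain ⟨z, hz⟩ := hx n
    exact ⟨φ z, by rw [← (hsemi.iterate_right n) z, hz]⟩
  have hmemy : φ y ∈ S := by
    intro n
    obtain ⟨z, hz⟩ := hy n
    exact ⟨φ z, by rw [← (hsemi.iterate_right n) z, hz]⟩
  -- g maps S into S
  have hgS : ∀ b ∈ S, g b ∈ S := by
    intro b hb n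
    obtain ⟨z, hz⟩ := hb n
    exact ⟨g z, by rw [← Function.iterate_succ_apply, Function.iterate_succ_apply', hz]⟩
  -- key: every element of S has a g-preimage in S
  have hkey : ∀ b ∈ S, ∃ c ∈ S, g c = b := by
    intro b hb
    -- for each n pick z with g^[n+1] z = b; c_n := g^[n] z
    have hc : ∀ n : ℕ, ∃ c : B, g c = b ∧ ∃ w, g^[n] w = c := by
      intro n
      obtain ⟨z, hz⟩ := hb (n + 1)
      exact ⟨g^[n] z, (Function.iterate_succ_apply' g n z).symm.trans hz, z, rfl⟩
    choose c hcb hcw using hc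
    obtain ⟨d, hd⟩ := Finite.exists_infinite_fiber c
    have hdne : (c ⁻¹' {d}).Infinite := by
      rw [Set.infinite_coe_iff] at hd; exact hd
    obtain ⟨m, hm⟩ := hdne.nonempty
    refine ⟨d, ?_, by rw [← hm]; exact hcb m⟩
    intro n
    obtain ⟨k, hk, hkn⟩ := hdne.exists_gt n
    obtain ⟨w, hw⟩ := hcw k
    refine ⟨g^[k - n] w, ?_⟩
    rw [← Function.iterate_add_apply, Nat.add_sub_cancel' hkn.le, hw, hk]
  -- g restricted to S is surjective, hence injective (S finite)
  let g' : S → S := fun b => ⟨g b, hgS b b.2⟩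
  have hsurj : Function.Surjective g' := by
    rintro ⟨b, hb⟩
    obtain ⟨c, hc, hcb⟩ := hkey b hb
    exact ⟨⟨c, hc⟩, Subtype.ext hcb⟩
  have hinj : Function.Injective g' :=
    (Finite.injective_iff_surjective).2 hsurj
  have : g' ⟨φ x, hmemx⟩ = g' ⟨φ y, hmemy⟩ := by
    apply Subtype.ext
    show g (φ x) = g (φ y)
    rw [← hφ x, ← hφ y, hfxy]
  exact congrArg Subtype.val (hinj this)
end

section
/- A monounary algebra (A,f) is residually finite if and only if for all distinct x, y ∈ A with f(x) = f(y), there exists n ∈ ℕ such that f^{-n}(x) = ∅ or f^{-n}(y) = ∅. -/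
def ResiduallyFinite {A : Type*} (f : A → A) : Prop :=
  ∀ x y : A, x ≠ y →
    ∃ (F : Type) (g : F → F) (φ : A → F),
      Finite F ∧ IsMonoHom f g φ ∧ φ x ≠ φ y

lemma RF.hom_iter {A B : Type*} {f : A → A} {g : B → B} {φ : A → B}
    (h : IsMonoHom f g φ) : ∀ (n : ℕ) (a : A), φ (f^[n] a) = g^[n] (φ a) := by
  intro n
  induction n with
  | zero => intro a; simp
  | succ k ih =>
    intro a
    rw [Function.iterate_succ_apply, Function.iterate_succ_apply, ih (f a), h a]

lemma RF.sep1 {A : Type*} (f : A → A) (x' y' : A) (hxy : x' ≠ y') (hf : f x' = f y')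
    (m : ℕ) (hm : preim f m x' = ∅) :
    ∃ (F : Type) (g : F → F) (φ : A → F), Finite F ∧ IsMonoHom f g φ ∧ φ x' ≠ φ y' := by
  classical
  have hm1 : 1 ≤ m := by
    rcases Nat.eq_zero_or_pos m with h0 | h; swap; · exact h
    exfalso
    have : x' ∈ preim f m x' := by simp [preim, h0]
    rw [hm] at this; exact this
  have hmem : ∀ b, b ∉ preim f m x' := by rw [hm]; simp
  have hbound : ∀ (a : A) (j : ℕ), f^[j] a = x' → j < m := by
    intro a j hj
    by_contra hcon
    push_neg at hcon
    have : f^[m] (f^[j - m] a) = x' := by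
      rw [← Function.iterate_add_apply, Nat.add_sub_cancel' hcon, hj]
    exact hmem _ this
  set S : A → Prop := fun a => ∃ j, f^[j] a = x' with hS
  have hSstep : ∀ a, S (f a) → S a := by
    rintro a ⟨j, hj⟩
    refine ⟨j + 1, ?_⟩
    rw [Function.iterate_succ_apply]; exact hj
  set φ : A → Fin (m + 1) := fun a =>
    if h : S a then ⟨Nat.find h, by have := hbound a _ (Nat.find_spec h); omega⟩
    else ⟨m, by omega⟩ with hφ
  have hφpos : ∀ (a : A) (h : S a), (φ a : ℕ) = Nat.find h := by
    intro a h; simp only [hφ, dif_pos h]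
  have hφneg : ∀ (a : A), ¬ S a → (φ a : ℕ) = m := by
    intro a h; simp only [hφ, dif_neg h]
  set g : Fin (m + 1) → Fin (m + 1) := fun k =>
    if (k : ℕ) = 0 then φ (f x') else if (k : ℕ) = m then k else ⟨(k : ℕ) - 1, by omega⟩ with hg
  have hg0 : ∀ k : Fin (m + 1), (k : ℕ) = 0 → g k = φ (f x') := by
    intro k hk; simp only [hg, if_pos hk]
  have hgm : ∀ k : Fin (m + 1), (k : ℕ) = m → g k = k := by
    intro k hk; simp only [hg]
    rw [if_neg (by omega), if_pos hk]
  have hgmid : ∀ (k : Fin (m + 1)) (i : ℕ), (k : ℕ) = i + 1 → i + 1 < m → (g k : ℕ) = i := by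
    intro k i hk hlt; simp only [hg]
    rw [if_neg (by omega), if_neg (by omega)]
    simp [hk]
  refine ⟨Fin (m + 1), g, φ, inferInstance, ?_, ?_⟩
  · -- homomorphism
    intro a
    by_cases h : S a
    · have hfind := Nat.find_spec h
      rcases Nat.eq_zero_or_pos (Nat.find h) with h0 | hpos
      · -- a = x'
        have hax : a = x' := by rw [h0] at hfind; simpa using hfind
        rw [hg0 (φ a) (by rw [hφpos a h, h0]), hax]
      · -- find = i+1
        obtain ⟨i, hi⟩ : ∃ i, Nat.find h = i + 1 := ⟨Nat.find h - 1, by omega⟩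
        have hfind' : f^[i + 1] a = x' := hi ▸ hfind
        rw [Function.iterate_succ_apply] at hfind'
        have hfa : S (f a) := ⟨i, hfind'⟩
        have hfind2 : Nat.find hfa = i := by
          apply le_antisymm
          · exact Nat.find_min' hfa hfind'
          · by_contra hcon
            push_neg at hcon
            have hsp := Nat.find_spec hfa
            have h2 : f^[Nat.find hfa + 1] a = x' := by
              rw [Function.iterate_succ_apply]; exact hsp
            have := Nat.find_min' h h2
            omega
        have hlt : i + 1 < m := by
          have := hbound a _ hfind; omega
        apply Fin.ext
        rw [hgmid (φ a) i (by rw [hφpos a h, hi]) hlt, hφpos _ hfa, hfind2]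
    · have hfa : ¬ S (f a) := fun hc => h (hSstep a hc)
      rw [hgm (φ a) (hφneg a h)]
      apply Fin.ext
      rw [hφneg _ hfa, hφneg a h]
  · -- separation
    have hx : S x' := ⟨0, rfl⟩
    have hvx : (φ x' : ℕ) = 0 := by
      rw [hφpos x' hx]
      have : Nat.find hx ≤ 0 := Nat.find_min' hx rfl
      omega
    have hy : ¬ S y' := by
      rintro ⟨j, hj⟩
      rcases Nat.eq_zero_or_pos j with h0 | hpos
      · rw [h0] at hj
        have : y' = x' := by simpa using hj
        exact hxy this.symm
      obtain ⟨i, rfl⟩ : ∃ i, j = i + 1 := ⟨j - 1, by omega⟩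
      rw [Function.iterate_succ_apply] at hj
      have hper : f^[i + 1] x' = x' := by
        rw [Function.iterate_succ_apply, hf]; exact hj
      have hmul : ∀ k : ℕ, f^[k * (i + 1)] x' = x' := by
        intro k
        induction k with
        | zero => simp
        | succ l ih =>
          rw [Nat.succ_mul, Nat.add_comm, Function.iterate_add_apply, ih, hper]
      have : f^[m] (f^[m * (i + 1) - m] x') = x' := by
        rw [← Function.iterate_add_apply,
          Nat.add_sub_cancel' (Nat.le_mul_of_pos_right m (by omega)), hmul]
      exact hmem _ this
    intro hcon
    have hvy : (φ y' : ℕ) = m := hφneg _ hy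
    rw [hcon, hvy] at hvx
    omega

lemma RF.sep2b {A : Type*} (f : A → A) (x y : A)
    (hn : ∀ k : ℕ, f^[k] x ≠ f^[k] y)
    (n m : ℕ) (hnm : f^[n] x = f^[m] y) :
    ∃ (F : Type) (g : F → F) (φ : A → F), Finite F ∧ IsMonoHom f g φ ∧ φ x ≠ φ y := by
  classical
  have hne : n ≠ m := by
    intro h; subst h; exact hn n hnm
  set EP : ℕ → Prop := fun d => ∃ p, ∀ t, p ≤ t → f^[t + d] x = f^[t] x with hEP
  have EP_sub : ∀ d e, d ≤ e → EP d → EP e → EP (e - d) := by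
    rintro d e hde ⟨pd, hpd⟩ ⟨pe, hpe⟩
    refine ⟨pd + pe, fun t ht => ?_⟩
    have h1 : f^[(t + (e - d)) + d] x = f^[t + (e - d)] x := hpd _ (by omega)
    have h2 : f^[t + e] x = f^[t] x := hpe _ (by omega)
    have h3 : (t + (e - d)) + d = t + e := by omega
    rw [h3] at h1
    rw [← h1, h2]
  have EP_of_eq : ∀ p q, p ≤ q → f^[p] x = f^[q] x → EP (q - p) := by
    intro p q hpq h
    refine ⟨p, fun t ht => ?_⟩
    have h1 : t + (q - p) = (t - p) + q := by omega
    have h2 : (t - p) + p = t := by omega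
    rw [h1, Function.iterate_add_apply, ← h, ← Function.iterate_add_apply, h2]
  have EP_mul : ∀ d, EP d → ∀ k : ℕ, EP (k * d) := by
    rintro d ⟨p, hp⟩ k
    refine ⟨p, fun t ht => ?_⟩
    induction k with
    | zero => simp
    | succ l ih =>
      have : t + (l + 1) * d = (t + l * d) + d := by ring
      rw [this]
      rw [hp _ (by omega), ih]
  obtain ⟨r, hr0, W, key2⟩ : ∃ r : ℕ, 0 < r ∧
      (∀ p q : ℕ, f^[p] x = f^[q] x → (p : ZMod r) = (q : ZMod r)) ∧
      (n : ZMod r) ≠ (m : ZMod r) := by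
    by_cases hper : ∃ d, 0 < d ∧ EP d
    · set r := Nat.find hper with hr
      obtain ⟨hrpos, hrEP⟩ := Nat.find_spec hper
      have hdvd : ∀ d, EP d → r ∣ d := by
        intro d
        induction d using Nat.strong_induction_on with
        | _ d ih =>
          intro hd
          rcases Nat.eq_zero_or_pos d with h0 | hdpos
          · simp [h0]
          rcases lt_or_ge d r with hlt | hge
          · exact absurd ⟨hdpos, hd⟩ (Nat.find_min hper hlt)
          · have h1 : EP (d - r) := EP_sub r d hge hrEP hd
            have h2 : r ∣ d - r := ih (d - r) (by omega) h1
            have : r ∣ (d - r) + r := Dvd.dvd.add h2 dvd_rfl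
            rwa [Nat.sub_add_cancel hge] at this
      have W : ∀ p q : ℕ, f^[p] x = f^[q] x → (p : ZMod r) = (q : ZMod r) := by
        have main : ∀ p q : ℕ, p ≤ q → f^[p] x = f^[q] x → (p : ZMod r) = (q : ZMod r) := by
          intro p q hpq h
          have := hdvd _ (EP_of_eq p q hpq h)
          rw [ZMod.natCast_eq_natCast_iff]
          exact (Nat.modEq_iff_dvd' hpq).mpr this
        intro p q h
        rcases le_total p q with hpq | hpq
        · exact main p q hpq h
        · exact (main q p hpq h.symm).symm
      refine ⟨r, hrpos, W, ?_⟩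
      intro heq
      rw [ZMod.natCast_eq_natCast_iff] at heq
      rcases lt_or_ge n m with hlt | hge
      · -- r ∣ m - n, EP (m - n)
        have hdv : r ∣ m - n := (Nat.modEq_iff_dvd' (le_of_lt hlt)).mp heq
        obtain ⟨k, hk⟩ := hdv
        have hEPd : EP (m - n) := by rw [hk, Nat.mul_comm]; exact EP_mul r hrEP k
        obtain ⟨p, hp⟩ := hEPd
        have h1 : f^[p + m] y = f^[p + n] x := by
          rw [Function.iterate_add_apply, ← hnm, ← Function.iterate_add_apply]
        have h2 : f^[(p + n) + (m - n)] x = f^[p + n] x := hp _ (by omega)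
        have h3 : (p + n) + (m - n) = p + m := by omega
        rw [h3] at h2
        exact hn (p + m) (by rw [h2, h1])
      · have hlt : m < n := by omega
        have hdv : r ∣ n - m := (Nat.modEq_iff_dvd' (le_of_lt hlt)).mp heq.symm
        obtain ⟨k, hk⟩ := hdv
        have hEPd : EP (n - m) := by rw [hk, Nat.mul_comm]; exact EP_mul r hrEP k
        obtain ⟨p, hp⟩ := hEPd
        obtain ⟨s, hs⟩ : ∃ s, p + n = s + m := ⟨p + n - m, by omega⟩
        have h1 : f^[s + m] y = f^[s + n] x := by
          rw [Function.iterate_add_apply, ← hnm, ← Function.iterate_add_apply]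
        rw [← hs] at h1
        have h2 : s + n = (p + n) + (n - m) := by omega
        have h3 : f^[(p + n) + (n - m)] x = f^[p + n] x := hp _ (by omega)
        rw [h2, h3] at h1
        exact hn (p + n) h1.symm
    · -- no period: orbit of x injective
      push_neg at hper
      refine ⟨max n m + 1, by omega, ?_, ?_⟩
      · intro p q h
        rcases le_total p q with hpq | hpq
        · have := EP_of_eq p q hpq h
          have : q - p = 0 := by
            by_contra hc
            exact absurd this (hper (q - p) (by omega))
          have : p = q := by omega
          rw [this]
        · have := EP_of_eq q p hpq h.symm
          have : p - q = 0 := by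
            by_contra hc
            exact absurd this (hper (p - q) (by omega))
          have : p = q := by omega
          rw [this]
      · intro heq
        rw [ZMod.natCast_eq_natCast_iff] at heq
        have h1 : n % (max n m + 1) = n := Nat.mod_eq_of_lt (by omega)
        have h2 : m % (max n m + 1) = m := Nat.mod_eq_of_lt (by omega)
        unfold Nat.ModEq at heq
        rw [h1, h2] at heq
        exact hne heq
  haveI : NeZero r := ⟨hr0.ne'⟩
  set S : A → Prop := fun a => ∃ pq : ℕ × ℕ, f^[pq.1] a = f^[pq.2] x with hSdef
  have WD : ∀ (a : A) (p q p' q' : ℕ), f^[p] a = f^[q] x → f^[p'] a = f^[q'] x →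
      (q : ZMod r) - p = (q' : ZMod r) - p' := by
    intro a p q p' q' h1 h2
    have e1 : f^[p' + p] a = f^[p' + q] x := by
      rw [Function.iterate_add_apply, h1, ← Function.iterate_add_apply]
    have e2 : f^[p + p'] a = f^[p + q'] x := by
      rw [Function.iterate_add_apply, h2, ← Function.iterate_add_apply]
    rw [Nat.add_comm p p'] at e2
    have e3 : f^[p' + q] x = f^[p + q'] x := by rw [← e1, e2]
    have := W _ _ e3
    push_cast at this
    linear_combination this
  set φ : A → Option (ZMod r) := fun a =>
    if h : S a then some ((h.choose.2 : ZMod r) - (h.choose.1 : ZMod r)) else none with hφ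
  have φ_spec : ∀ (a : A) (p q : ℕ), f^[p] a = f^[q] x →
      φ a = some ((q : ZMod r) - (p : ZMod r)) := by
    intro a p q h
    have hSa : S a := ⟨(p, q), h⟩
    simp only [hφ, dif_pos hSa]
    congr 1
    exact WD a _ _ p q hSa.choose_spec h
  have φ_none : ∀ a : A, ¬ S a → φ a = none := by
    intro a h; simp only [hφ, dif_neg h]
  have Sstep : ∀ a, S (f a) → S a := by
    rintro a ⟨⟨p, q⟩, h⟩
    refine ⟨(p + 1, q), ?_⟩
    rw [Function.iterate_succ_apply]
    exact h
  refine ⟨Option (ZMod r), Option.map (· + 1), φ, inferInstance, ?_, ?_⟩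
  · intro a
    by_cases h : S a
    · obtain ⟨⟨p, q⟩, hpq⟩ := h
      have h2 : f^[p] (f a) = f^[q + 1] x := by
        rw [← Function.iterate_succ_apply, Function.iterate_succ_apply',
          Function.iterate_succ_apply', hpq]
      rw [φ_spec (f a) p (q + 1) h2, φ_spec a p q hpq]
      simp only [Option.map_some]
      congr 1
      push_cast
      ring
    · have hfa : ¬ S (f a) := fun hc => h (Sstep a hc)
      rw [φ_none a h, φ_none (f a) hfa]
      rfl
  · rw [φ_spec x 0 0 rfl, φ_spec y m n hnm.symm]
    intro hcon
    have h := Option.some_injective _ hcon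
    simp only [Nat.cast_zero, sub_zero, sub_self] at h
    exact key2 (sub_eq_zero.mp h.symm)

theorem residually_finite_iff_RF_criterion {A : Type*} (f : A → A) :
    ResiduallyFinite f ↔
      ∀ x y : A, x ≠ y → f x = f y →
        ∃ n : ℕ, preim f n x = ∅ ∨ preim f n y = ∅ := by
  classical
  constructor
  · -- forward
    intro hRF x y hxy hfxy
    by_contra hc
    push_neg at hc
    obtain ⟨F, g, φ, hFin, hhom, hsep⟩ := hRF x y hxy
    haveI := hFin
    apply hsep
    suffices key : ∀ i j : ℕ, i < j → g^[i] = g^[j] → φ x = φ y by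
      obtain ⟨i, j, hij, hgij⟩ := Finite.exists_ne_map_eq_of_infinite (fun k : ℕ => g^[k])
      rcases hij.lt_or_gt with h | h
      · exact key i j h hgij
      · exact key j i h hgij.symm
    intro i j hij hgij
    obtain ⟨b, hb⟩ := (hc i).1
    obtain ⟨c, hcc⟩ := (hc i).2
    have hbx : f^[i] b = x := hb
    have hcy : f^[i] c = y := hcc
    have hφx : φ x = g^[i] (φ b) := by rw [← hbx, RF.hom_iter hhom]
    have hφy : φ y = g^[i] (φ c) := by rw [← hcy, RF.hom_iter hhom]
    set p := j - i with hp
    have hp1 : 1 ≤ p := by omega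
    have per : ∀ u : F, g^[p] (g^[i] u) = g^[i] u := by
      intro u
      rw [← Function.iterate_add_apply, show p + i = j by omega, hgij]
    have perx : g^[p] (φ x) = φ x := by rw [hφx, per]
    have pery : g^[p] (φ y) = φ y := by rw [hφy, per]
    have hstep : g (φ x) = g (φ y) := by
      rw [← hhom x, ← hhom y, hfxy]
    obtain ⟨p1, hpeq⟩ : ∃ p1, p = p1 + 1 := ⟨p - 1, by omega⟩
    calc φ x = g^[p] (φ x) := perx.symm
      _ = g^[p1] (g (φ x)) := by rw [hpeq, Function.iterate_succ_apply]
      _ = g^[p1] (g (φ y)) := by rw [hstep]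
      _ = g^[p] (φ y) := by rw [hpeq, Function.iterate_succ_apply]
      _ = φ y := pery
  · -- backward
    intro hcrit x y hxy
    by_cases hc : ∃ k : ℕ, f^[k] x = f^[k] y
    · set k0 := Nat.find hc with hk0
      have hspec : f^[k0] x = f^[k0] y := Nat.find_spec hc
      have hk01 : 1 ≤ k0 := by
        rcases Nat.eq_zero_or_pos k0 with h0 | h; swap; · exact h
        rw [h0] at hspec
        simp at hspec
        exact absurd hspec hxy
      set k1 := k0 - 1 with hk1
      have hne : f^[k1] x ≠ f^[k1] y := Nat.find_min hc (by omega)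
      have hfe : f (f^[k1] x) = f (f^[k1] y) := by
        rw [← Function.iterate_succ_apply' f k1 x, ← Function.iterate_succ_apply' f k1 y,
          Nat.succ_eq_add_one, show k1 + 1 = k0 by omega]
        exact hspec
      obtain ⟨mm, hor⟩ := hcrit (f^[k1] x) (f^[k1] y) hne hfe
      have hsep : ∃ (F : Type) (g : F → F) (φ : A → F),
          Finite F ∧ IsMonoHom f g φ ∧ φ (f^[k1] x) ≠ φ (f^[k1] y) := by
        rcases hor with h | h
        · exact RF.sep1 f _ _ hne hfe mm h
        · obtain ⟨F, g, φ, h1, h2, h3⟩ := RF.sep1 f _ _ hne.symm hfe.symm mm h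
          exact ⟨F, g, φ, h1, h2, h3.symm⟩
      obtain ⟨F, g, φ, h1, h2, h3⟩ := hsep
      refine ⟨F, g, φ, h1, h2, ?_⟩
      intro hcon
      apply h3
      rw [RF.hom_iter h2, RF.hom_iter h2, hcon]
    · push_neg at hc
      by_cases hS : ∃ n m : ℕ, f^[n] x = f^[m] y
      · obtain ⟨n, m, hnm⟩ := hS
        exact RF.sep2b f x y hc n m hnm
      · -- disjoint orbits
        push_neg at hS
        set S : A → Prop := fun a => ∃ p q : ℕ, f^[p] a = f^[q] x with hSdef
        have hiff : ∀ a, S (f a) ↔ S a := by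
          intro a
          constructor
          · rintro ⟨p, q, h⟩
            refine ⟨p + 1, q, ?_⟩
            rw [Function.iterate_succ_apply]
            exact h
          · rintro ⟨p, q, h⟩
            refine ⟨p, q + 1, ?_⟩
            rw [← Function.iterate_succ_apply, Function.iterate_succ_apply',
              Function.iterate_succ_apply', h]
        refine ⟨Bool, id, fun a => if S a then true else false, inferInstance, ?_, ?_⟩
        · intro a
          simp only [id]
          by_cases h : S a
          · rw [if_pos h, if_pos ((hiff a).mpr h)]
          · rw [if_neg h, if_neg (fun hc2 => h ((hiff a).mp hc2))]
        · have hSx : S x := ⟨0, 0, rfl⟩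
          have hSy : ¬ S y := by
            rintro ⟨p, q, h⟩
            exact hS q p h.symm
          show (if S x then true else false) ≠ (if S y then true else false)
          rw [if_pos hSx, if_neg hSy]
          simp
end

section
/- A monounary algebra A with connected components {K_i} is residually finite if and only if every connected component K_i is residually finite. -/
/-- The connectedness relation on a monounary algebra: the equivalence relation
generated by `u ~ f u`. -/
def connRel {A : Type*} (f : A → A) : A → A → Prop :=
  Relation.EqvGen (fun u v => f u = v)

/-- The connected component of `a`. -/
def component {A : Type*} (f : A → A) (a : A) : Type _ :=
  {x : A // connRel f x a}

/-- The restriction of `f` to the connected component of `a`. -/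
def componentMap {A : Type*} (f : A → A) (a : A) :
    component f a → component f a :=
  fun x => ⟨f x.val,
    Relation.EqvGen.trans _ _ _
      (Relation.EqvGen.symm _ _ (Relation.EqvGen.rel _ _ rfl)) x.2⟩

open Relation

theorem ResiduallyFinite.of_injective {A B : Type*} {f : A → A} {g : B → B}
    (hf : ResiduallyFinite f) {ψ : B → A} (hψ : IsMonoHom g f ψ) (hinj : ψ.Injective) :
    ResiduallyFinite g := by
  intro x y hxy
  obtain ⟨F, h, φ, hF, hφ, hne⟩ := hf (ψ x) (ψ y) (hinj.ne hxy)
  exact ⟨F, h, φ ∘ ψ, hF, fun b => by simp only [Function.comp, hψ b, hφ (ψ b)], hne⟩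

section Components

variable {A : Type*} (f : A → A)

theorem connRel_apply_left_iff (z a : A) : connRel f (f z) a ↔ connRel f z a :=
  ⟨EqvGen.trans _ _ _ (EqvGen.rel _ _ rfl),
    EqvGen.trans _ _ _ (EqvGen.symm _ _ (EqvGen.rel _ _ rfl))⟩

theorem isMonoHom_connRel (a : A) : IsMonoHom f id (fun z => connRel f z a) :=
  fun z => propext (connRel_apply_left_iff f z a)

theorem isMonoHom_component_val (a : A) : IsMonoHom (componentMap f a) f Subtype.val :=
  fun _ => rfl

open Classical in
noncomputable def componentExtend {F : Type*} (a : A) (φ : component f a → F) : A → Option F :=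
  fun z => if h : connRel f z a then some (φ ⟨z, h⟩) else none

variable {f}

theorem componentExtend_of_connRel {F : Type*} {a z : A} (φ : component f a → F)
    (h : connRel f z a) : componentExtend f a φ z = some (φ ⟨z, h⟩) :=
  dif_pos h

theorem isMonoHom_componentExtend {F : Type*} {a : A} {g : F → F} {φ : component f a → F}
    (hφ : IsMonoHom (componentMap f a) g φ) :
    IsMonoHom f (Option.map g) (componentExtend f a φ) := by
  intro z
  by_cases h : connRel f z a
  · rw [componentExtend_of_connRel φ h,
      componentExtend_of_connRel φ ((connRel_apply_left_iff f z a).mpr h), Option.map_some]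
    exact congrArg some (hφ ⟨z, h⟩)
  · have h' : ¬ connRel f (f z) a := mt (connRel_apply_left_iff f z a).mp h
    simp only [componentExtend, dif_neg h, dif_neg h', Option.map_none]

end Components

theorem residually_finite_iff_components {A : Type*} (f : A → A) :
    ResiduallyFinite f ↔ ∀ a : A, ResiduallyFinite (componentMap f a) := by
  refine ⟨fun hf a => hf.of_injective (isMonoHom_component_val f a) Subtype.val_injective,
    fun h x y hxy => ?_⟩
  have hxx : connRel f x x := EqvGen.refl x
  by_cases hyx : connRel f y x
  · obtain ⟨F, g, φ, hF, hφ, hne⟩ :=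
      h x ⟨x, hxx⟩ ⟨y, hyx⟩ (fun e => hxy (congrArg Subtype.val e))
    refine ⟨Option F, Option.map g, componentExtend f x φ, inferInstance,
      isMonoHom_componentExtend hφ, ?_⟩
    rw [componentExtend_of_connRel φ hxx, componentExtend_of_connRel φ hyx]
    exact fun e => hne (Option.some_injective _ e)
  · exact ⟨Prop, id, fun z => connRel f z x, inferInstance, isMonoHom_connRel f x,
      fun e => hyx (cast e hxx)⟩
end

section
/- Every backwards-bounded monounary algebra is residually finite. -/
def BackwardsBounded {A : Type*} (f : A → A) : Prop :=
  ∀ a : A, ∃ n : ℕ, preim f n a = ∅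

section OrbitWindow

variable {A : Type*}

def orbitWindow (f : A → A) (S : Set A) (n : ℕ) (a : A) : Fin n → Prop :=
  fun k => f^[k] a ∈ S

def windowShift (n : ℕ) (p : Fin n → Prop) : Fin n → Prop :=
  fun k => ∃ h : (k : ℕ) + 1 < n, p ⟨k + 1, h⟩

theorem isMonoHom_orbitWindow {f : A → A} {S : Set A} {n : ℕ} (hS : ∀ a, f^[n] a ∉ S) :
    IsMonoHom f (windowShift n) (orbitWindow f S n) := by
  intro a
  funext k
  refine propext ⟨fun hk => ⟨?_, hk⟩, fun ⟨_, hk⟩ => hk⟩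
  have hlt : (k : ℕ) + 1 ≤ n := k.isLt
  refine lt_of_le_of_ne hlt fun hn => hS a ?_
  rw [← hn, Function.iterate_succ_apply]
  exact hk

end OrbitWindow

theorem backwards_bounded_residually_finite {A : Type*} (f : A → A)
    (h : BackwardsBounded f) : ResiduallyFinite f := by
  intro x y hxy
  obtain ⟨n, hn⟩ := h x
  have hS : ∀ b, f^[n] b ∉ ({x} : Set A) := fun b => Set.eq_empty_iff_forall_notMem.mp hn b
  have hpos : 0 < n := Nat.pos_of_ne_zero fun h0 => hS x (by simp [h0])
  refine ⟨Fin n → Prop, windowShift n, orbitWindow f {x} n, inferInstance,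
    isMonoHom_orbitWindow hS, fun heq => hxy ?_⟩
  have hy : orbitWindow f {x} n y ⟨0, hpos⟩ := heq ▸ rfl
  exact (hy : y = x).symm
end

section
/- Let A be a monounary algebra that is not residually finite, and B a monounary algebra that is not backwards-bounded. Then the direct product A × B is not residually finite. -/
/-!
If `f₁` is not residually finite, it has elements `u ≠ v` with `f₁ u = f₁ v` that both have
preimages of every depth. Indeed, take `x ≠ y` that no finite quotient separates. If
`f^[k] x ≠ f^[k] y` for all `k`, they are separated by the set of phases `q - p` at which
`f^[p] y = f^[q] x`, taken modulo a period of the orbit of `x` (or modulo a large number if that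
orbit is not eventually periodic). Otherwise let `u = f^[k] x`, `v = f^[k] y` be the last
distinct points of the two orbits; if `u` had no preimages of depth `n`, the set of times `r < n`
at which an orbit visits `u` would separate `x` from `y`.

Pairing `u`, `v` with a point `b` of unbounded depth gives points `(u, b) ≠ (v, b)` of `A × B`
with a common image and preimages of every depth. In a finite algebra `g` is injective on the
range of a large enough iterate `g^[e]`, so every finite quotient identifies `(u, b)` and `(v, b)`.
-/

open Function Set

section

variable {A : Type*} (f : A → A)

def FinitelySeparable (x y : A) : Prop :=
  ∃ (F : Type) (g : F → F) (φ : A → F), Finite F ∧ IsMonoHom f g φ ∧ φ x ≠ φ y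

variable {f}

theorem FinitelySeparable.symm {x y : A} (h : FinitelySeparable f x y) :
    FinitelySeparable f y x :=
  let ⟨F, g, φ, hF, hφ, hne⟩ := h
  ⟨F, g, φ, hF, hφ, hne.symm⟩

theorem IsMonoHom.mem_range_iterate {B : Type*} {g : B → B} {φ : A → B} (hφ : IsMonoHom f g φ)
    {a : A} {n : ℕ} (ha : a ∈ range f^[n]) : φ a ∈ range g^[n] := by
  obtain ⟨c, rfl⟩ := ha
  exact ⟨φ c, (Semiconj.iterate_right hφ n c).symm⟩

variable (f)

def phases (x : A) (m : ℕ) (a : A) : Set (ZMod m) :=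
  {r | ∃ p q : ℕ, f^[p] a = f^[q] x ∧ (q - p : ZMod m) = r}

theorem isMonoHom_phases (x : A) (m : ℕ) :
    IsMonoHom f (preimage (· - 1)) (phases f x m) := by
  intro a
  ext r
  constructor
  · rintro ⟨p, q, hpq, rfl⟩
    exact ⟨p + 1, q, by rwa [iterate_succ_apply], by push_cast; ring⟩
  · rintro ⟨p, q, hpq, hr⟩
    refine ⟨p, q + 1, ?_, ?_⟩
    · rw [← iterate_succ_apply, iterate_succ_apply', hpq, iterate_succ_apply']
    · push_cast
      linear_combination hr

def depths (u : A) (n : ℕ) (a : A) : Set (Fin n) :=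
  {r | f^[r] a = u}

variable {f}

theorem lt_of_iterate_eq_of_notMem_range {u a : A} {n r : ℕ} (hu : u ∉ range f^[n])
    (h : f^[r] a = u) : r < n := by
  by_contra! hr
  exact hu ⟨f^[r - n] a, by rw [← iterate_add_apply, Nat.add_sub_cancel' hr, h]⟩

theorem isMonoHom_depths {u : A} {n : ℕ} (hu : u ∉ range f^[n]) :
    IsMonoHom f (fun S => {r : Fin n | ∃ h : (r : ℕ) + 1 < n, ⟨r + 1, h⟩ ∈ S}) (depths f u n) := by
  intro a
  ext r
  simp only [depths, mem_ofPred_eq, ← iterate_succ_apply]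
  exact ⟨fun h => ⟨lt_of_iterate_eq_of_notMem_range hu h, h⟩, fun ⟨_, h⟩ => h⟩

theorem finitelySeparable_of_notMem_range {u x y : A} {n r : ℕ} (hu : u ∉ range f^[n])
    (hx : f^[r] x = u) (hy : f^[r] y ≠ u) : FinitelySeparable f x y := by
  refine ⟨Set (Fin n), _, depths f u n, inferInstance, isMonoHom_depths hu, fun h => hy ?_⟩
  have hrx : (⟨r, lt_of_iterate_eq_of_notMem_range hu hx⟩ : Fin n) ∈ depths f u n x := hx
  rwa [h] at hrx

variable (f)

theorem exists_modulus_iterate_eq_of_modEq (x y : A) :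
    ∃ m, 0 < m ∧ ∀ p q, f^[p] y = f^[q] x → p ≡ q [MOD m] → ∃ k, f^[k] x = f^[k] y := by
  by_cases hper : ∃ s L, 0 < L ∧ IsPeriodicPt f L (f^[s] x)
  · obtain ⟨s, L, hL, hper⟩ := hper
    refine ⟨L, hL, fun p q hpq hmod => ⟨p + s, ?_⟩⟩
    calc f^[p + s] x = f^[q] (f^[s] x) := by
          rw [iterate_add_apply, ← hper.iterate_mod_apply, hmod, hper.iterate_mod_apply]
      _ = f^[p + s] y := by
          rw [← Commute.iterate_iterate_self, ← hpq, ← iterate_add_apply, add_comm]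
  push Not at hper
  have hinj : ∀ a b, f^[a] x = f^[b] x → a = b := by
    intro a b hab
    by_contra hne
    wlog hlt : a < b generalizing a b
    · exact this b a hab.symm (Ne.symm hne) (by omega)
    refine hper a (b - a) (by omega) ?_
    rw [IsPeriodicPt, IsFixedPt, ← iterate_add_apply, Nat.sub_add_cancel hlt.le, hab]
  by_cases hmeet : ∃ i j, f^[i] y = f^[j] x
  · obtain ⟨i, j, hij⟩ := hmeet
    refine ⟨i + j + 1, by omega, fun p q hpq hmod => ⟨p, ?_⟩⟩
    have hpj : p + j = q + i := hinj _ _ <| by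
      rw [iterate_add_apply, ← hij, Commute.iterate_iterate_self, hpq, ← iterate_add_apply,
        add_comm]
    have hij' : j ≡ i [MOD i + j + 1] :=
      Nat.ModEq.add_left_cancel hmod (by rw [hpj])
    have : p = q := by
      have := hij'.eq_of_lt_of_lt (by omega) (by omega)
      omega
    subst this
    exact hpq.symm
  · exact ⟨1, one_pos, fun p q hpq _ => absurd ⟨p, q, hpq⟩ hmeet⟩

variable {f}

theorem finitelySeparable_of_forall_iterate_ne {x y : A} (h : ∀ k, f^[k] x ≠ f^[k] y) :
    FinitelySeparable f x y := by
  obtain ⟨m, hm, hmod⟩ := exists_modulus_iterate_eq_of_modEq f x y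
  have : NeZero m := ⟨hm.ne'⟩
  refine ⟨Set (ZMod m), _, phases f x m, inferInstance, isMonoHom_phases f x m, fun hxy => ?_⟩
  have h0 : (0 : ZMod m) ∈ phases f x m y := hxy ▸ ⟨0, 0, rfl, by simp⟩
  obtain ⟨p, q, hpq, hqp⟩ := h0
  obtain ⟨k, hk⟩ := hmod p q hpq ((ZMod.natCast_eq_natCast_iff _ _ _).1 (sub_eq_zero.1 hqp).symm)
  exact h k hk

theorem exists_iterate_ne_and_iterate_succ_eq {x y : A} (hxy : x ≠ y) {n : ℕ}
    (h : f^[n] x = f^[n] y) : ∃ k, f^[k] x ≠ f^[k] y ∧ f^[k + 1] x = f^[k + 1] y := by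
  induction n with
  | zero => exact absurd h hxy
  | succ n ih =>
    by_cases hn : f^[n] x = f^[n] y
    · exact ih hn
    · exact ⟨n, hn, h⟩

theorem exists_collision_of_not_residuallyFinite (h : ¬ ResiduallyFinite f) :
    ∃ u v, u ≠ v ∧ f u = f v ∧ (∀ n, u ∈ range f^[n]) ∧ ∀ n, v ∈ range f^[n] := by
  obtain ⟨x, y, hxy, hsep⟩ : ∃ x y, x ≠ y ∧ ¬ FinitelySeparable f x y := by
    simpa [ResiduallyFinite, FinitelySeparable] using h
  obtain ⟨n, hn⟩ : ∃ n, f^[n] x = f^[n] y := by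
    by_contra! hne
    exact hsep (finitelySeparable_of_forall_iterate_ne hne)
  obtain ⟨k, hne, heq⟩ := exists_iterate_ne_and_iterate_succ_eq hxy hn
  refine ⟨f^[k] x, f^[k] y, hne, by simpa only [iterate_succ_apply'] using heq, fun n => ?_,
    fun n => ?_⟩
  · by_contra hu
    exact hsep (finitelySeparable_of_notMem_range hu rfl (Ne.symm hne))
  · by_contra hv
    exact hsep (finitelySeparable_of_notMem_range hv rfl hne).symm

end

theorem Finite.exists_injOn_range_iterate {F : Type*} [Finite F] (g : F → F) :
    ∃ e, InjOn g (range g^[e]) := by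
  obtain ⟨m, n, hmn, heq⟩ := Finite.exists_ne_map_eq_of_infinite fun n : ℕ => g^[n]
  wlog hlt : m < n generalizing m n
  · exact this n m hmn.symm heq.symm (by omega)
  obtain ⟨d, rfl⟩ := Nat.exists_eq_add_of_lt hlt
  have hret : ∀ u ∈ range g^[m], g^[d] (g u) = u := by
    rintro u ⟨a, rfl⟩
    rw [← iterate_succ_apply, ← iterate_add_apply, show d.succ + m = m + d + 1 by omega, ← heq]
  exact ⟨m, fun u hu v hv huv => by rw [← hret u hu, huv, hret v hv]⟩

theorem product_not_residually_finite {A B : Type*} (f₁ : A → A) (f₂ : B → B)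
    (hA : ¬ ResiduallyFinite f₁) (hB : ¬ BackwardsBounded f₂) :
    ¬ ResiduallyFinite (fun p : A × B => (f₁ p.1, f₂ p.2)) := by
  intro hRF
  obtain ⟨u, v, huv, hfuv, hu, hv⟩ := exists_collision_of_not_residuallyFinite hA
  obtain ⟨b, hb⟩ : ∃ b, ∀ n, b ∈ range f₂^[n] := by
    simpa [BackwardsBounded, preim, eq_empty_iff_forall_notMem] using hB
  obtain ⟨F, g, φ, hF, hφ, hne⟩ := hRF (u, b) (v, b) (by simp [huv])
  obtain ⟨e, hinj⟩ := Finite.exists_injOn_range_iterate g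
  have hrange : ∀ a, (∀ n, a ∈ range f₁^[n]) → φ (a, b) ∈ range g^[e] := fun a ha =>
    hφ.mem_range_iterate <| show (a, b) ∈ range (Prod.map f₁ f₂)^[e] by
      rw [Prod.map_iterate, range_prodMap]
      exact ⟨ha e, hb e⟩
  refine hne (hinj (hrange u hu) (hrange v hv) ?_)
  rw [← hφ, ← hφ]
  show φ (f₁ u, f₂ b) = φ (f₁ v, f₂ b)
  rw [hfuv]
end

section
/- A direct product A × B of monounary algebras is residually finite if and only if (both A and B are residually finite) or A is backwards-bounded or B is backwards-bounded. -/
/-! ### Auxiliary notions -/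

/-- An element is *deep* if it has preimages at every depth. -/
def MyDeep {A : Type*} (f : A → A) (a : A) : Prop := ∀ n : ℕ, ∃ u, f^[n] u = a

/-- No two distinct deep elements merge at equal times. -/
def MyGood {A : Type*} (f : A → A) : Prop :=
  ∀ x y, MyDeep f x → MyDeep f y → (∃ m : ℕ, f^[m] x = f^[m] y) → x = y

lemma hom_iterate {A F : Type*} {f : A → A} {g : F → F} {φ : A → F}
    (h : IsMonoHom f g φ) (n : ℕ) (a : A) : φ (f^[n] a) = g^[n] (φ a) := by
  induction n with
  | zero => simp
  | succ n ih =>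
    rw [Function.iterate_succ_apply', Function.iterate_succ_apply', h, ih]

lemma deep_map {A F : Type*} {f : A → A} {g : F → F} {φ : A → F}
    (h : IsMonoHom f g φ) {a : A} (ha : MyDeep f a) : MyDeep g (φ a) := by
  intro n
  obtain ⟨u, hu⟩ := ha n
  exact ⟨φ u, by rw [← hom_iterate h, hu]⟩

lemma deep_apply {F : Type*} (g : F → F) {q : F} (h : MyDeep g q) : MyDeep g (g q) := by
  intro n
  obtain ⟨u, hu⟩ := h n
  refine ⟨g u, ?_⟩
  rw [← Function.iterate_succ_apply, Function.iterate_succ_apply', hu]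

lemma deep_surj {F : Type*} [Finite F] (g : F → F) {q : F} (hq : MyDeep g q) :
    ∃ c, MyDeep g c ∧ g c = q := by
  have h : ∀ n : ℕ, ∃ u, g^[n + 1] u = q := fun n => hq (n + 1)
  choose u hu using h
  obtain ⟨c, hc⟩ := Finite.exists_infinite_fiber (fun n => g^[n] (u n))
  have hge : ∀ N : ℕ, ∃ n, N ≤ n ∧ g^[n] (u n) = c := by
    intro N
    obtain ⟨n, hn1, hn2⟩ := (Set.infinite_coe_iff.mp hc).exists_gt N
    exact ⟨n, hn2.le, hn1⟩
  refine ⟨c, ?_, ?_⟩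
  · intro N
    obtain ⟨n, hNn, hn⟩ := hge N
    refine ⟨g^[n - N] (u n), ?_⟩
    rw [← Function.iterate_add_apply, Nat.add_sub_cancel' hNn, hn]
  · obtain ⟨n, _, hn⟩ := hge 0
    rw [← hn, ← Function.iterate_succ_apply' g n (u n), hu]

lemma deep_inj {F : Type*} [Finite F] (g : F → F) {a b : F}
    (ha : MyDeep g a) (hb : MyDeep g b) (h : g a = g b) : a = b := by
  have hfin : ({q | MyDeep g q} : Set F).Finite := Set.toFinite _
  have hmaps : Set.MapsTo g {q | MyDeep g q} {q | MyDeep g q} := fun q hq => deep_apply g hq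
  have hsurj : Set.SurjOn g {q | MyDeep g q} {q | MyDeep g q} := by
    intro q hq
    obtain ⟨c, hc, hcq⟩ := deep_surj g hq
    exact ⟨c, hc, hcq⟩
  have hinj : Set.InjOn g {q | MyDeep g q} :=
    (((hfin.surjOn_iff_bijOn_of_mapsTo hmaps).mp hsurj)).injOn
  exact hinj ha hb h

lemma deep_iterate_inj {F : Type*} [Finite F] (g : F → F) (m : ℕ) :
    ∀ a b : F, MyDeep g a → MyDeep g b → g^[m] a = g^[m] b → a = b := by
  induction m with
  | zero => intro a b _ _ h; simpa using h
  | succ m ih =>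
    intro a b ha hb hab
    rw [Function.iterate_succ_apply, Function.iterate_succ_apply] at hab
    exact deep_inj g ha hb (ih _ _ (deep_apply g ha) (deep_apply g hb) hab)

lemma rf_good {A : Type*} {f : A → A} (h : ResiduallyFinite f) : MyGood f := by
  rintro x y hx hy ⟨m, hm⟩
  by_contra hne
  obtain ⟨F, g, φ, hF, hhom, hsep⟩ := h x y hne
  exact hsep (deep_iterate_inj g m _ _ (deep_map hhom hx) (deep_map hhom hy)
    (by rw [← hom_iterate hhom, ← hom_iterate hhom, hm]))

/-- Abbreviation for the separation conclusion. -/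
def MySep {A : Type*} (f : A → A) (x y : A) : Prop :=
  ∃ (F : Type) (g : F → F) (φ : A → F), Finite F ∧ IsMonoHom f g φ ∧ φ x ≠ φ y

/-- Separation when `x` is not deep: record the distance to `x`. -/
lemma sep_shallow {A : Type*} (f : A → A) (x y : A) (hxy : x ≠ y)
    {N : ℕ} (hN : ∀ u, f^[N] u ≠ x) : MySep f x y := by
  classical
  have hN1 : 0 < N := by
    rcases Nat.eq_zero_or_pos N with h | h
    · exact absurd (by simp [h] : f^[N] x = x) (hN x)
    · exact h
  have noper : ∀ q, 0 < q → f^[q] x ≠ x := by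
    intro q hq hfix
    have hmul : ∀ k, f^[q * k] x = x := by
      intro k
      induction k with
      | zero => simp
      | succ k ih => rw [Nat.mul_succ, Function.iterate_add_apply, hfix, ih]
    have hle : N ≤ q * N := Nat.le_mul_of_pos_left N hq
    exact hN (f^[q * N - N] x)
      (by rw [← Function.iterate_add_apply, Nat.add_sub_cancel' hle, hmul N])
  have uniq : ∀ z n n', f^[n] z = x → f^[n'] z = x → n = n' := by
    have key : ∀ z a b, a < b → f^[a] z = x → f^[b] z = x → False := by
      intro z a b hab h1 h2
      refine noper (b - a) (by omega) ?_
      calc f^[b - a] x = f^[b - a] (f^[a] z) := by rw [h1]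
        _ = f^[b - a + a] z := (Function.iterate_add_apply f (b - a) a z).symm
        _ = f^[b] z := by rw [Nat.sub_add_cancel hab.le]
        _ = x := h2
    intro z n n' h1 h2
    rcases Nat.lt_trichotomy n n' with h | h | h
    · exact absurd (key z n n' h h1 h2) not_false
    · exact h
    · exact absurd (key z n' n h h2 h1) not_false
  have bound : ∀ z n, f^[n] z = x → n < N := by
    intro z n hn
    by_contra hge
    exact hN (f^[n - N] z)
      (by rw [← Function.iterate_add_apply, Nat.add_sub_cancel' (by omega : N ≤ n), hn])
  -- the depth function
  set d : A → ℕ := fun z => if h : ∃ n, f^[n] z = x then h.choose else N with hd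
  have dval : ∀ z n, f^[n] z = x → d z = n := by
    intro z n hn
    have h : ∃ n, f^[n] z = x := ⟨n, hn⟩
    simp only [hd, dif_pos h]
    exact uniq z h.choose n h.choose_spec hn
  have dnone : ∀ z, ¬(∃ n, f^[n] z = x) → d z = N := by
    intro z h
    simp only [hd, dif_neg h]
  have dle : ∀ z, d z ≤ N := by
    intro z
    by_cases h : ∃ n, f^[n] z = x
    · exact (bound z (d z) (by rw [dval z h.choose h.choose_spec]; exact h.choose_spec)).le
    · rw [dnone z h]
  refine ⟨Fin (N + 1),
    fun kk => if kk.val = 0 ∨ kk.val = N then ⟨N, N.lt_succ_self⟩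
      else ⟨kk.val - 1, by omega⟩,
    fun z => ⟨d z, Nat.lt_succ_of_le (dle z)⟩, inferInstance, ?_, ?_⟩
  · intro z
    by_cases h : ∃ n, f^[n] z = x
    · obtain ⟨n, hn⟩ := h
      have hdz : d z = n := dval z n hn
      match n, hn, hdz with
      | 0, hn, hdz =>
        have hzx : z = x := by simpa using hn
        have hnot : ¬(∃ n', f^[n'] (f z) = x) := by
          rintro ⟨n', hn'⟩
          subst hzx
          exact noper (n' + 1) (by omega)
            (by rw [Function.iterate_succ_apply]; exact hn')
        have : d (f z) = N := dnone _ hnot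
        apply Fin.ext
        simp [this, hdz]
      | (m + 1), hn, hdz =>
        have hfz : f^[m] (f z) = x := by rw [← Function.iterate_succ_apply]; exact hn
        have h1 : d (f z) = m := dval _ m hfz
        have h2 : m + 1 < N := bound z (m + 1) hn
        apply Fin.ext
        simp only [h1, hdz]
        rw [if_neg (by simp; omega)]
        simp
    · have h2 : ¬(∃ n', f^[n'] (f z) = x) := by
        rintro ⟨n', hn'⟩
        exact h ⟨n' + 1, by rw [Function.iterate_succ_apply]; exact hn'⟩
      have e1 : d z = N := dnone z h
      have e2 : d (f z) = N := dnone _ h2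
      apply Fin.ext
      simp [e1, e2]
  · have hx0 : d x = 0 := dval x 0 (by simp)
    intro heq
    have hy0 : d y = 0 := by
      have h := congrArg Fin.val heq
      simp only [hx0] at h
      omega
    by_cases h : ∃ n, f^[n] y = x
    · obtain ⟨n, hn⟩ := h
      have hdyn := dval y n hn
      have : y = x := by
        have h0 : f^[0] y = x := by rw [(by omega : (0 : ℕ) = n)]; exact hn
        simpa using h0
      exact hxy this.symm
    · have := dnone y h
      omega

/-- Separation when the orbits of `x` and `y` never meet. -/
lemma sep_disjoint {A : Type*} (f : A → A) (x y : A)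
    (hsep : ∀ m n : ℕ, f^[m] y ≠ f^[n] x) : MySep f x y := by
  classical
  have key : ∀ z : A, (∃ m n : ℕ, f^[m] (f z) = f^[n] x) ↔ (∃ m n : ℕ, f^[m] z = f^[n] x) := by
    intro z
    constructor
    · rintro ⟨m, n, h⟩
      exact ⟨m + 1, n, by rw [Function.iterate_succ_apply]; exact h⟩
    · rintro ⟨m, n, h⟩
      refine ⟨m, n + 1, ?_⟩
      rw [← Function.iterate_succ_apply, Function.iterate_succ_apply',
        Function.iterate_succ_apply', h]
  refine ⟨Bool, id, fun z => if (∃ m n : ℕ, f^[m] z = f^[n] x) then true else false,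
    inferInstance, ?_, ?_⟩
  · intro z
    simp only [id_eq]
    exact if_congr (key z) rfl rfl
  · have h1 : (∃ m n : ℕ, f^[m] x = f^[n] x) := ⟨0, 0, rfl⟩
    have h2 : ¬(∃ m n : ℕ, f^[m] y = f^[n] x) := by
      rintro ⟨m, n, h⟩
      exact hsep m n h
    simp [if_pos h1, if_neg h2]

/-- Separation when orbits meet but `x` is never eventually periodic: grade mod `k`. -/
lemma sep_grade {A : Type*} (f : A → A) (x y : A)
    (hne : ∀ M : ℕ, f^[M] x ≠ f^[M] y)
    (hnoper : ∀ a b : ℕ, f^[a] x = f^[b] x → a = b)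
    (m₀ n₀ : ℕ) (hmerge : f^[m₀] x = f^[n₀] y) : MySep f x y := by
  classical
  set k := m₀ + n₀ + 1 with hk
  have valwd : ∀ z (m n m' n' : ℕ), f^[m] z = f^[n] x → f^[m'] z = f^[n'] x →
      m' + n = m + n' := by
    intro z m n m' n' h1 h2
    have e1 : f^[m' + m] z = f^[m' + n] x := by
      rw [Function.iterate_add_apply, h1, ← Function.iterate_add_apply]
    have e2 : f^[m + m'] z = f^[m + n'] x := by
      rw [Function.iterate_add_apply, h2, ← Function.iterate_add_apply]
    have e3 : f^[m' + n] x = f^[m + n'] x := by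
      rw [← e1, Nat.add_comm m' m, e2]
    exact hnoper _ _ e3
  set φ : A → Option (ZMod k) := fun z =>
    if h : ∃ m n : ℕ, f^[m] z = f^[n] x then
      some ((h.choose_spec.choose : ZMod k) - (h.choose : ZMod k))
    else none with hφ
  have φval : ∀ z (m n : ℕ), f^[m] z = f^[n] x → φ z = some ((n : ZMod k) - m) := by
    intro z m n hmn
    have h : ∃ m n : ℕ, f^[m] z = f^[n] x := ⟨m, n, hmn⟩
    have hspec : f^[h.choose] z = f^[h.choose_spec.choose] x := h.choose_spec.choose_spec
    have hwd : h.choose + n = m + h.choose_spec.choose := valwd z m n _ _ hmn hspec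
    simp only [hφ, dif_pos h]
    congr 1
    have : ((h.choose : ZMod k) + n) = (m : ZMod k) + h.choose_spec.choose := by
      exact_mod_cast congrArg (Nat.cast : ℕ → ZMod k) hwd
    linear_combination -this
  have φnone : ∀ z, ¬(∃ m n : ℕ, f^[m] z = f^[n] x) → φ z = none := by
    intro z h
    simp only [hφ, dif_neg h]
  refine ⟨Option (ZMod k), Option.map (· + 1), φ, inferInstance, ?_, ?_⟩
  · intro z
    by_cases h : ∃ m n : ℕ, f^[m] z = f^[n] x
    · obtain ⟨m, n, hmn⟩ := h
      have h1 : f^[m] (f z) = f^[n + 1] x := by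
        rw [← Function.iterate_succ_apply, Function.iterate_succ_apply',
          Function.iterate_succ_apply', hmn]
      rw [φval (f z) m (n + 1) h1, φval z m n hmn]
      simp only [Option.map_some]
      congr 1
      push_cast
      ring
    · have h2 : ¬(∃ m n : ℕ, f^[m] (f z) = f^[n] x) := by
        rintro ⟨m, n, hmn⟩
        exact h ⟨m + 1, n, by rw [Function.iterate_succ_apply]; exact hmn⟩
      rw [φnone z h, φnone (f z) h2]
      rfl
  · rw [φval x 0 0 rfl, φval y n₀ m₀ hmerge.symm]
    intro heq
    have h1 : (m₀ : ZMod k) - n₀ = 0 - 0 := (Option.some_injective _ heq).symm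
    have h2 : (m₀ : ZMod k) = (n₀ : ZMod k) := by linear_combination h1
    have h3 : m₀ % k = n₀ % k := (ZMod.natCast_eq_natCast_iff' _ _ _).mp h2
    rw [Nat.mod_eq_of_lt (by omega), Nat.mod_eq_of_lt (by omega)] at h3
    subst h3
    exact hne m₀ hmerge

/-- Separation when orbits meet and `x` is eventually periodic: retract onto the cycle. -/
lemma sep_cycle {A : Type*} (f : A → A) (x y : A)
    (hne : ∀ M : ℕ, f^[M] x ≠ f^[M] y)
    (m₀ n₀ : ℕ) (hmerge : f^[m₀] x = f^[n₀] y)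
    (r p₀ : ℕ) (hp₀ : 0 < p₀) (hper : f^[r + p₀] x = f^[r] x) : MySep f x y := by
  classical
  set c := f^[r] x with hc
  have hQ : ∃ q : ℕ, 0 < q ∧ f^[q] c = c :=
    ⟨p₀, hp₀, by rw [hc, ← Function.iterate_add_apply, Nat.add_comm, hper]⟩
  set p := Nat.find hQ with hpdef
  obtain ⟨hppos, hpc⟩ : 0 < p ∧ f^[p] c = c := Nat.find_spec hQ
  have hmulc : ∀ j : ℕ, f^[p * j] c = c := by
    intro j
    induction j with
    | zero => simp
    | succ j ih => rw [Nat.mul_succ, Function.iterate_add_apply, hpc, ih]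
  have hdvd : ∀ q : ℕ, f^[q] c = c → p ∣ q := by
    intro q hq
    have hmod : f^[q % p] c = c := by
      calc f^[q % p] c = f^[q % p] (f^[p * (q / p)] c) := by rw [hmulc]
        _ = f^[q % p + p * (q / p)] c := (Function.iterate_add_apply _ _ _ _).symm
        _ = f^[q] c := by rw [Nat.mod_add_div]
        _ = c := hq
    rcases Nat.eq_zero_or_pos (q % p) with h | h
    · exact Nat.dvd_of_mod_eq_zero h
    · exact absurd ⟨h, hmod⟩ (Nat.find_min hQ (Nat.mod_lt q hppos))
  haveI : NeZero p := ⟨hppos.ne'⟩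
  have valwd : ∀ z (n n' : ℕ), f^[n] z = c → f^[n'] z = c → (n : ZMod p) = (n' : ZMod p) := by
    have key : ∀ z (a b : ℕ), a ≤ b → f^[a] z = c → f^[b] z = c → (a : ZMod p) = (b : ZMod p) := by
      intro z a b hab h1 h2
      have hbc : f^[b - a] c = c := by
        calc f^[b - a] c = f^[b - a] (f^[a] z) := by rw [h1]
          _ = f^[b - a + a] z := (Function.iterate_add_apply _ _ _ _).symm
          _ = f^[b] z := by rw [Nat.sub_add_cancel hab]
          _ = c := h2
      obtain ⟨j, hj⟩ := hdvd _ hbc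
      have : b = a + p * j := by omega
      rw [this]
      push_cast [ZMod.natCast_self]
      ring
    intro z n n' h1 h2
    rcases le_total n n' with h | h
    · exact key z n n' h h1 h2
    · exact (key z n' n h h2 h1).symm
  set φ : A → Option (ZMod p) := fun z =>
    if h : ∃ n : ℕ, f^[n] z = c then some (-(h.choose : ZMod p)) else none with hφ
  have φval : ∀ z (n : ℕ), f^[n] z = c → φ z = some (-(n : ZMod p)) := by
    intro z n hn
    have h : ∃ n : ℕ, f^[n] z = c := ⟨n, hn⟩
    simp only [hφ, dif_pos h]
    rw [valwd z h.choose n h.choose_spec hn]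
  have φnone : ∀ z, ¬(∃ n : ℕ, f^[n] z = c) → φ z = none := fun z h => by
    simp only [hφ, dif_neg h]
  refine ⟨Option (ZMod p), Option.map (· + 1), φ, inferInstance, ?_, ?_⟩
  · intro z
    by_cases h : ∃ n : ℕ, f^[n] z = c
    · obtain ⟨n, hn⟩ := h
      have hw : f^[n + p - 1] (f z) = c := by
        have e : n + p - 1 + 1 = p + n := by omega
        rw [← Function.iterate_succ_apply, Nat.succ_eq_add_one, e, Function.iterate_add_apply, hn, hpc]
      rw [φval (f z) _ hw, φval z n hn]
      simp only [Option.map_some]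
      congr 1
      have e : n + p - 1 = n + (p - 1) := by omega
      rw [e]
      push_cast [Nat.cast_sub hppos, ZMod.natCast_self]
      ring
    · have h2 : ¬(∃ n : ℕ, f^[n] (f z) = c) := by
        rintro ⟨n, hn⟩
        exact h ⟨n + 1, by rw [Function.iterate_succ_apply]; exact hn⟩
      rw [φnone z h, φnone (f z) h2]
      rfl
  · have hpm : m₀ + 1 ≤ p * (m₀ + 1) := Nat.le_mul_of_pos_left _ hppos
    set t := r + p * (m₀ + 1) - m₀ with htdef
    have ht : m₀ + t = r + p * (m₀ + 1) := by omega
    have h1 : f^[t + n₀] y = f^[t + m₀] x := by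
      rw [Function.iterate_add_apply, ← hmerge, ← Function.iterate_add_apply]
    have h2 : t + m₀ = p * (m₀ + 1) + r := by omega
    have hyw : f^[t + n₀] y = c := by
      rw [h1, h2, Function.iterate_add_apply, ← hc, hmulc]
    rw [φval x r rfl, φval y _ hyw]
    intro heq
    have h3 : (-(r : ZMod p)) = -((t + n₀ : ℕ) : ZMod p) := Option.some_injective _ heq
    have h4 : ((t + n₀ : ℕ) : ZMod p) = (r : ZMod p) := by linear_combination h3
    have h5 : (t + n₀) % p = r % p := (ZMod.natCast_eq_natCast_iff' _ _ _).mp h4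
    have h6 : (m₀ + t) % p = r % p := by
      rw [ht]
      conv_rhs => rw [← Nat.add_mul_mod_self_left r p (m₀ + 1)]
    -- hence m₀ ≡ n₀ [MOD p]
    have h7 : (m₀ + t) % p = (n₀ + t) % p := by rw [h6, ← h5, Nat.add_comm t n₀]
    have h8 : m₀ % p = n₀ % p := by
      have := Nat.ModEq.add_right_cancel' t h7
      exact this
    -- now produce an equal-time merge
    rcases le_total m₀ n₀ with hmn | hmn
    · obtain ⟨a, ha⟩ : p ∣ n₀ - m₀ := (Nat.modEq_iff_dvd' hmn).mp h8
      have hMx : f^[t + n₀] x = c := by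
        have e : t + n₀ = p * (m₀ + 1 + a) + r := by
          have : p * (m₀ + 1 + a) = p * (m₀ + 1) + p * a := by ring
          omega
        rw [e, Function.iterate_add_apply, ← hc, hmulc]
      exact hne (t + n₀) (by rw [hMx, hyw])
    · obtain ⟨a, ha⟩ : p ∣ m₀ - n₀ := (Nat.modEq_iff_dvd' hmn).mp h8.symm
      have haa : a ≤ m₀ := by
        have : a ≤ p * a := Nat.le_mul_of_pos_left _ hppos
        omega
      have hMx : f^[t + n₀] x = c := by
        have e1 : p * (m₀ + 1) = p * (m₀ + 1 - a) + p * a := by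
          rw [← Nat.mul_add]
          congr 1
          omega
        have e : t + n₀ = p * (m₀ + 1 - a) + r := by omega
        rw [e, Function.iterate_add_apply, ← hc, hmulc]
      exact hne (t + n₀) (by rw [hMx, hyw])

lemma good_rf {A : Type*} {f : A → A} (hg : MyGood f) : ResiduallyFinite f := by
  have main : ∀ x y : A, x ≠ y → MySep f x y := by
    intro x y hxy
    by_cases hdx : MyDeep f x
    · by_cases hdy : MyDeep f y
      · have hne : ∀ M : ℕ, f^[M] x ≠ f^[M] y := fun M h => hxy (hg x y hdx hdy ⟨M, h⟩)
        by_cases hmeet : ∃ m n : ℕ, f^[m] x = f^[n] y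
        · obtain ⟨m₀, n₀, hmerge⟩ := hmeet
          by_cases hper : ∃ r p : ℕ, 0 < p ∧ f^[r + p] x = f^[r] x
          · obtain ⟨r, p, hp, hper⟩ := hper
            exact sep_cycle f x y hne m₀ n₀ hmerge r p hp hper
          · push_neg at hper
            have hnoper : ∀ a b : ℕ, f^[a] x = f^[b] x → a = b := by
              intro a b hab
              by_contra hne'
              rcases Nat.lt_or_ge a b with h | h
              · exact hper a (b - a) (by omega)
                  (by rw [Nat.add_sub_cancel' h.le]; exact hab.symm)
              · have hlt : b < a := by omega
                exact hper b (a - b) (by omega)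
                  (by rw [Nat.add_sub_cancel' hlt.le]; exact hab)
            exact sep_grade f x y hne hnoper m₀ n₀ hmerge
        · refine sep_disjoint f x y fun m n h => hmeet ⟨n, m, h.symm⟩
      · have hdy' : ∃ N : ℕ, ∀ u, f^[N] u ≠ y := by
          unfold MyDeep at hdy; push_neg at hdy; exact hdy
        obtain ⟨N, hN⟩ := hdy'
        obtain ⟨F, g, φ, h1, h2, h3⟩ := sep_shallow f y x hxy.symm hN
        exact ⟨F, g, φ, h1, h2, h3.symm⟩
    · have hdx' : ∃ N : ℕ, ∀ u, f^[N] u ≠ x := by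
        unfold MyDeep at hdx; push_neg at hdx; exact hdx
      obtain ⟨N, hN⟩ := hdx'
      exact sep_shallow f x y hxy hN
  exact main

lemma rf_iff_good {A : Type*} (f : A → A) : ResiduallyFinite f ↔ MyGood f :=
  ⟨rf_good, good_rf⟩

lemma bb_iff {A : Type*} (f : A → A) : BackwardsBounded f ↔ ∀ a, ¬ MyDeep f a := by
  constructor
  · intro h a hdeep
    obtain ⟨n, hn⟩ := h a
    obtain ⟨u, hu⟩ := hdeep n
    exact Set.eq_empty_iff_forall_notMem.mp hn u hu
  · intro h a
    have h' := h a
    unfold MyDeep at h'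
    push_neg at h'
    obtain ⟨n, hn⟩ := h'
    exact ⟨n, Set.eq_empty_iff_forall_notMem.mpr hn⟩

lemma prod_iterate {A B : Type*} (f₁ : A → A) (f₂ : B → B) (n : ℕ) (q : A × B) :
    (fun p : A × B => (f₁ p.1, f₂ p.2))^[n] q = (f₁^[n] q.1, f₂^[n] q.2) := by
  induction n generalizing q with
  | zero => simp
  | succ n ih =>
    rw [Function.iterate_succ_apply, ih]
    simp [Function.iterate_succ_apply]

lemma deep_prod {A B : Type*} (f₁ : A → A) (f₂ : B → B) (q : A × B) :
    MyDeep (fun p : A × B => (f₁ p.1, f₂ p.2)) q ↔ MyDeep f₁ q.1 ∧ MyDeep f₂ q.2 := by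
  constructor
  · intro h
    constructor
    · intro n
      obtain ⟨u, hu⟩ := h n
      rw [prod_iterate] at hu
      exact ⟨u.1, congrArg Prod.fst hu⟩
    · intro n
      obtain ⟨u, hu⟩ := h n
      rw [prod_iterate] at hu
      exact ⟨u.2, congrArg Prod.snd hu⟩
  · rintro ⟨h1, h2⟩ n
    obtain ⟨u1, hu1⟩ := h1 n
    obtain ⟨u2, hu2⟩ := h2 n
    refine ⟨(u1, u2), ?_⟩
    rw [prod_iterate]
    simp only at hu1 hu2 ⊢
    rw [hu1, hu2]

theorem product_residually_finite_iff {A B : Type*} (f₁ : A → A) (f₂ : B → B) :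
    ResiduallyFinite (fun p : A × B => (f₁ p.1, f₂ p.2)) ↔
      (ResiduallyFinite f₁ ∧ ResiduallyFinite f₂) ∨
        BackwardsBounded f₁ ∨ BackwardsBounded f₂ := by
  rw [rf_iff_good, rf_iff_good, rf_iff_good, bb_iff, bb_iff]
  constructor
  · intro hG
    by_cases hA : ∃ a, MyDeep f₁ a
    · by_cases hB : ∃ b, MyDeep f₂ b
      · obtain ⟨a₀, ha₀⟩ := hA
        obtain ⟨b₀, hb₀⟩ := hB
        left
        constructor
        · rintro x y hx hy ⟨m, hm⟩
          have h := hG (x, b₀) (y, b₀) ((deep_prod _ _ _).mpr ⟨hx, hb₀⟩)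
            ((deep_prod _ _ _).mpr ⟨hy, hb₀⟩)
            ⟨m, by rw [prod_iterate, prod_iterate]; simp only; rw [hm]⟩
          exact congrArg Prod.fst h
        · rintro x y hx hy ⟨m, hm⟩
          have h := hG (a₀, x) (a₀, y) ((deep_prod _ _ _).mpr ⟨ha₀, hx⟩)
            ((deep_prod _ _ _).mpr ⟨ha₀, hy⟩)
            ⟨m, by rw [prod_iterate, prod_iterate]; simp only; rw [hm]⟩
          exact congrArg Prod.snd h
      · right; right
        push_neg at hB
        exact hB
    · right; left
      push_neg at hA
      exact hA
  · rintro (⟨h1, h2⟩ | h | h)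
    · rintro q q' hq hq' ⟨m, hm⟩
      rw [prod_iterate, prod_iterate] at hm
      obtain ⟨hq1, hq2⟩ := (deep_prod _ _ _).mp hq
      obtain ⟨hq1', hq2'⟩ := (deep_prod _ _ _).mp hq'
      exact Prod.ext (h1 _ _ hq1 hq1' ⟨m, congrArg Prod.fst hm⟩)
        (h2 _ _ hq2 hq2' ⟨m, congrArg Prod.snd hm⟩)
    · rintro q q' hq _ _
      exact (h q.1 ((deep_prod _ _ _).mp hq).1).elim
    · rintro q q' hq _ _
      exact (h q.2 ((deep_prod _ _ _).mp hq).2).elim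
end
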